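/- For every s ≥ 0 and j ≥ 0, there exist polynomials P_1,...,P_s ∈ ℤ[a] with each P_k homogeneous of degree k such that h_j(x|τ^{−s}a) = h_j(x|a) + Σ_{k=1}^{s} P_k · h_{j−k}(x|a); moreover the P_k depend only on s and j (not on the number of variables p beyond its role in the recursion constants t_{j+p−s}, t_{1−s}). -/
import Mathlib


open Finset
open scoped Classical

noncomputable section

variable {R : Type*} [CommRing R]

/-- shifted sequence: `(τ^s a)_n = a_{n+s}` -/
def shiftSeq (a : ℤ → R) (s : ℤ) : ℤ → R := fun n => a (n + s)

/-- factorial complete homogeneous function `h_k(x|a)`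
    (`= Σ_{1≤i_1≤...≤i_k≤p} ∏_r (x_{i_r} - a_{i_r + r - 1})`, `0` for `k < 0`) -/
def fh (p : ℕ) (x : Fin p → R) (a : ℤ → R) (k : ℤ) : R :=
  if 0 ≤ k then
    ∑ f ∈ Finset.univ.filter (fun f : Fin k.toNat → Fin p => Monotone f),
      ∏ r : Fin k.toNat, (x (f r) - a (((f r : ℕ) : ℤ) + ((r : ℕ) : ℤ) + 1))
  else 0

/-- factorial elementary function `e_k(x|a)`
    (`= Σ_{1≤i_1<...<i_k≤p} ∏_r (x_{i_r} - a_{i_r - r + 1})`, `0` for `k < 0`;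
    it vanishes automatically for `k > p`) -/
def fe (p : ℕ) (x : Fin p → R) (a : ℤ → R) (k : ℤ) : R :=
  if 0 ≤ k then
    ∑ f ∈ Finset.univ.filter (fun f : Fin k.toNat → Fin p => StrictMono f),
      ∏ r : Fin k.toNat, (x (f r) - a (((f r : ℕ) : ℤ) - ((r : ℕ) : ℤ) + 1))
  else 0

/-- generalized factorial power `(y|a)^k = (y - a_1)⋯(y - a_k)` -/
def gfp (y : R) (a : ℤ → R) (k : ℕ) : R :=
  ∏ i ∈ Finset.range k, (y - a ((i : ℤ) + 1))

/-- the factorial Schur polynomial `s_λ(x|a)`, defined through the factorial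
    Jacobi-Trudi determinant `det( h_{λ_i - i + j}(x | τ^{1-j} a) )_{1≤i,j≤p}` -/
def fschur (p : ℕ) (lam : Fin p → ℕ) (x : Fin p → R) (a : ℤ → R) : R :=
  Matrix.det (Matrix.of fun i j : Fin p =>
    fh p x (shiftSeq a (-((j : ℕ) : ℤ))) (((lam i : ℕ) : ℤ) - ((i : ℕ) : ℤ) + ((j : ℕ) : ℤ)))

lemma fh_neg (p : ℕ) (x : Fin p → R) (a : ℤ → R) {k : ℤ} (h : k < 0) : fh p x a k = 0 :=
  if_neg (by omega)

lemma fh_zero (p : ℕ) (x : Fin p → R) (a : ℤ → R) : fh p x a 0 = 1 := by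
  have hm : ∀ f : Fin 0 → Fin p, Monotone f := fun f i j h => i.elim0
  simp [fh, Finset.filter_true_of_mem, hm]

lemma fh_zero_vars (x : Fin 0 → R) (a : ℤ → R) (k : ℤ) (hk : k ≠ 0) : fh 0 x a k = 0 := by
  rcases lt_or_ge k 0 with h | h
  · exact if_neg (by omega)
  · rw [fh, if_pos h]
    have hn : k.toNat ≠ 0 := by omega
    have : IsEmpty (Fin k.toNat → Fin 0) := ⟨fun f => (f ⟨0, by omega⟩).elim0⟩
    simp

lemma fh_natCast (p n : ℕ) (x : Fin p → R) (a : ℤ → R) :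
    fh p x a (n : ℤ) =
      ∑ f ∈ Finset.univ.filter (fun f : Fin n → Fin p => Monotone f),
        ∏ r : Fin n, (x (f r) - a (((f r : ℕ) : ℤ) + ((r : ℕ) : ℤ) + 1)) := by
  rw [fh, if_pos (by positivity)]
  simp only [Int.toNat_natCast]

lemma monotone_snoc_last {n p : ℕ} {g : Fin n → Fin (p+1)} (hg : Monotone g) :
    Monotone (Fin.snoc g (Fin.last p)) := by
  intro i j hij
  rcases Fin.eq_castSucc_or_eq_last j with ⟨j', rfl⟩ | rfl
  · rcases Fin.eq_castSucc_or_eq_last i with ⟨i', rfl⟩ | rfl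
    · simpa [Fin.snoc_castSucc] using hg (Fin.castSucc_le_castSucc_iff.mp hij)
    · exact absurd hij (Fin.castSucc_lt_last j').not_ge
  · simp [Fin.snoc_last, Fin.le_last]

lemma key (p n : ℕ) (x : Fin (p+1) → R) (a : ℤ → R) :
    (∑ f ∈ Finset.univ.filter (fun f : Fin (n+1) → Fin (p+1) => Monotone f),
      ∏ r : Fin (n+1), (x (f r) - a (((f r : ℕ) : ℤ) + ((r : ℕ) : ℤ) + 1)))
    = (∑ f ∈ Finset.univ.filter (fun f : Fin (n+1) → Fin p => Monotone f),
        ∏ r : Fin (n+1), ((x ∘ Fin.castSucc) (f r) - a (((f r : ℕ) : ℤ) + ((r : ℕ) : ℤ) + 1)))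
      + (x (Fin.last p) - a ((p : ℤ) + (n : ℤ) + 1)) *
        (∑ f ∈ Finset.univ.filter (fun f : Fin n → Fin (p+1) => Monotone f),
          ∏ r : Fin n, (x (f r) - a (((f r : ℕ) : ℤ) + ((r : ℕ) : ℤ) + 1))) := by
  classical
  rw [← Finset.sum_filter_add_sum_filter_not
      (Finset.univ.filter (fun f : Fin (n+1) → Fin (p+1) => Monotone f))
      (fun f => f (Fin.last n) = Fin.last p)]
  have hA : (∑ f ∈ (Finset.univ.filter (fun f : Fin (n+1) → Fin (p+1) => Monotone f)).filter
        (fun f => f (Fin.last n) = Fin.last p),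
      ∏ r : Fin (n+1), (x (f r) - a (((f r : ℕ) : ℤ) + ((r : ℕ) : ℤ) + 1)))
      = (x (Fin.last p) - a ((p : ℤ) + (n : ℤ) + 1)) *
        (∑ f ∈ Finset.univ.filter (fun f : Fin n → Fin (p+1) => Monotone f),
          ∏ r : Fin n, (x (f r) - a (((f r : ℕ) : ℤ) + ((r : ℕ) : ℤ) + 1))) := by
    rw [Finset.mul_sum]
    refine Finset.sum_bij' (fun f _ => fun r : Fin n => f r.castSucc)
      (fun g _ => Fin.snoc g (Fin.last p)) ?_ ?_ ?_ ?_ ?_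
    · intro f hf
      simp only [Finset.mem_filter, Finset.mem_univ, true_and] at hf ⊢
      exact hf.1.comp Fin.strictMono_castSucc.monotone
    · intro g hg
      simp only [Finset.mem_filter, Finset.mem_univ, true_and] at hg ⊢
      exact ⟨monotone_snoc_last hg, Fin.snoc_last _ _⟩
    · intro f hf
      simp only [Finset.mem_filter, Finset.mem_univ, true_and] at hf
      have := Fin.snoc_init_self f
      rw [hf.2] at this
      exact this
    · intro g hg
      funext r
      simp [Fin.snoc_castSucc]
    · intro f hf
      simp only [Finset.mem_filter, Finset.mem_univ, true_and] at hf
      rw [Fin.prod_univ_castSucc]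
      rw [hf.2]
      simp only [Fin.val_last, Fin.coe_castSucc]
      ring
  rw [hA]
  have hB : (∑ f ∈ (Finset.univ.filter (fun f : Fin (n+1) → Fin (p+1) => Monotone f)).filter
        (fun f => ¬ f (Fin.last n) = Fin.last p),
      ∏ r : Fin (n+1), (x (f r) - a (((f r : ℕ) : ℤ) + ((r : ℕ) : ℤ) + 1)))
      = (∑ f ∈ Finset.univ.filter (fun f : Fin (n+1) → Fin p => Monotone f),
        ∏ r : Fin (n+1), ((x ∘ Fin.castSucc) (f r) - a (((f r : ℕ) : ℤ) + ((r : ℕ) : ℤ) + 1))) := by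
    refine Finset.sum_bij' (fun f hf => fun r : Fin (n+1) => (⟨(f r : ℕ), by
        simp only [Finset.mem_filter, Finset.mem_univ, true_and] at hf
        have h1 : f r ≤ f (Fin.last n) := hf.1 (Fin.le_last r)
        have h2 : f (Fin.last n) < Fin.last p := Fin.lt_last_iff_ne_last.mpr hf.2
        have h1' := Fin.le_def.mp h1
        have h2' := Fin.lt_def.mp h2
        simp only [Fin.val_last] at h2'
        omega⟩ : Fin p))
      (fun g _ => Fin.castSucc ∘ g) ?_ ?_ ?_ ?_ ?_
    · intro f hf
      simp only [Finset.mem_filter, Finset.mem_univ, true_and] at hf ⊢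
      intro i j hij
      exact hf.1 hij
    · intro g hg
      simp only [Finset.mem_filter, Finset.mem_univ, true_and] at hg ⊢
      refine ⟨Fin.strictMono_castSucc.monotone.comp hg, (Fin.castSucc_lt_last _).ne⟩
    · intro f hf
      funext r
      exact Fin.ext rfl
    · intro g hg
      funext r
      exact Fin.ext rfl
    · intro f hf
      refine Finset.prod_congr rfl fun r _ => rfl
  rw [hB]
  ring

lemma fh_succ (p : ℕ) (x : Fin (p+1) → R) (a : ℤ → R) (k : ℤ) :
    fh (p+1) x a k = fh p (x ∘ Fin.castSucc) a k
      + (x (Fin.last p) - a (k + p)) * fh (p+1) x a (k-1) := by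
  rcases lt_trichotomy k 0 with h | rfl | h
  · rw [fh_neg _ _ _ h, fh_neg _ _ _ h, fh_neg _ _ _ (by omega : k-1 < 0)]; ring
  · rw [fh_zero, fh_zero, fh_neg _ _ _ (by norm_num : (0:ℤ)-1 < 0)]; ring
  · obtain ⟨n, rfl⟩ : ∃ n : ℕ, k = (n:ℤ)+1 := ⟨(k-1).toNat, by omega⟩
    have e2 : ((n:ℤ)+1) - 1 = ((n:ℕ):ℤ) := by ring
    have e1 : ((n:ℤ)+1) = ((n+1:ℕ):ℤ) := by push_cast; ring
    rw [e2, e1, fh_natCast, fh_natCast, fh_natCast,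
      show (((n+1:ℕ):ℤ) + p) = ((p:ℤ) + (n:ℤ) + 1) by push_cast; ring]
    exact key p n x a

lemma fh_shift_one (p : ℕ) (x : Fin p → R) (a : ℤ → R) (j : ℤ) :
    fh p x (shiftSeq a (-1)) j
      = fh p x a j + (a (j + p - 1) - a 0) * fh p x a (j - 1) := by
  induction p generalizing a j with
  | zero =>
    rcases eq_or_ne j 0 with rfl | h0
    · rw [fh_zero, fh_zero, fh_neg _ _ _ (by norm_num : (0:ℤ)-1 < 0)]; ring
    rcases eq_or_ne j 1 with rfl | h1
    · rw [fh_zero_vars _ _ _ h0, fh_zero_vars _ _ _ h0, show (1:ℤ)-1 = 0 by ring, fh_zero]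
      norm_num
    · rw [fh_zero_vars _ _ _ h0, fh_zero_vars _ _ _ h0,
        fh_zero_vars _ _ _ (by omega : j - 1 ≠ 0)]
      ring
  | succ p ih =>
    rcases lt_or_ge j 0 with h | h
    · rw [fh_neg _ _ _ h, fh_neg _ _ _ h, fh_neg _ _ _ (by omega : j-1 < 0)]; ring
    obtain ⟨n, rfl⟩ : ∃ n : ℕ, j = (n:ℕ) := ⟨j.toNat, by omega⟩
    clear h
    induction n with
    | zero =>
      rw [show ((0:ℕ):ℤ) = 0 by norm_num, fh_zero, fh_zero,
        fh_neg _ _ _ (by norm_num : (0:ℤ)-1 < 0)]; ring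
    | succ n ihn =>
      have e1 := fh_succ p x (shiftSeq a (-1)) ((n:ℤ)+1)
      have e2 := fh_succ p x a ((n:ℤ)+1)
      have e3 := fh_succ p x a ((n:ℤ))
      have o1 := ih (x ∘ Fin.castSucc) a ((n:ℤ)+1)
      have i1 := ihn
      simp only [shiftSeq] at e1 o1 i1 ⊢
      push_cast at e1 e2 e3 o1 i1 ⊢
      ring_nf at e1 e2 e3 o1 i1 ⊢
      linear_combination e1 + o1 + (x (Fin.last p) - a ((n:ℤ) + p)) * i1 - e2
        - (a ((n:ℤ) + p) - a 0) * e3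

lemma aux (p s : ℕ) (j : ℤ) :
    ∃ P : Fin s → MvPolynomial ℤ ℤ,
      (∀ k : Fin s, (P k).IsHomogeneous ((k : ℕ) + 1)) ∧
      fh p (MvPolynomial.X : Fin p → MvPolynomial (Fin p) (MvPolynomial ℤ ℤ))
          (shiftSeq (fun i => MvPolynomial.C (MvPolynomial.X i)) (-(s : ℤ))) j =
        fh p (MvPolynomial.X : Fin p → MvPolynomial (Fin p) (MvPolynomial ℤ ℤ))
          (fun i => MvPolynomial.C (MvPolynomial.X i)) j +
          ∑ k : Fin s, MvPolynomial.C (P k) *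
            fh p (MvPolynomial.X : Fin p → MvPolynomial (Fin p) (MvPolynomial ℤ ℤ))
              (fun i => MvPolynomial.C (MvPolynomial.X i)) (j - (((k : ℕ) : ℤ) + 1)) := by
  induction s generalizing j with
  | zero =>
    refine ⟨fun _ => 0, fun k => k.elim0, ?_⟩
    have h0 : shiftSeq (fun i => (MvPolynomial.C (MvPolynomial.X i)
          : MvPolynomial (Fin p) (MvPolynomial ℤ ℤ))) (-((0:ℕ) : ℤ))
        = fun i => (MvPolynomial.C (MvPolynomial.X i) : MvPolynomial (Fin p) (MvPolynomial ℤ ℤ)) :=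
      funext fun n => by simp [shiftSeq]
    rw [h0]
    simp
  | succ s ih =>
    obtain ⟨P, hP, hPe⟩ := ih j
    obtain ⟨Q, hQ, hQe⟩ := ih (j - 1)
    set CA : ℤ → MvPolynomial (Fin p) (MvPolynomial ℤ ℤ) :=
      fun i => MvPolynomial.C (MvPolynomial.X i) with hCA
    have hshift : shiftSeq CA (-((s+1:ℕ) : ℤ)) = shiftSeq (shiftSeq CA (-(s:ℤ))) (-1) := by
      funext n
      simp only [shiftSeq]
      congr 1
      push_cast
      ring
    set d : MvPolynomial ℤ ℤ :=
      MvPolynomial.X (j + (p:ℤ) - 1 + -(s:ℤ)) - MvPolynomial.X (0 + -(s:ℤ)) with hd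
    have hdh : d.IsHomogeneous 1 :=
      (MvPolynomial.isHomogeneous_X _ _).sub (MvPolynomial.isHomogeneous_X _ _)
    have hc : shiftSeq CA (-(s:ℤ)) (j + (p:ℤ) - 1) - shiftSeq CA (-(s:ℤ)) 0
        = MvPolynomial.C d := by
      simp [shiftSeq, hCA, hd, map_sub]
    have step := fh_shift_one p
      (MvPolynomial.X : Fin p → MvPolynomial (Fin p) (MvPolynomial ℤ ℤ))
      (shiftSeq CA (-(s:ℤ))) j
    rw [hc] at step
    set Pnew : Fin (s+1) → MvPolynomial ℤ ℤ :=
      fun k => (Fin.snoc P (0 : MvPolynomial ℤ ℤ) : Fin (s+1) → MvPolynomial ℤ ℤ) k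
        + d * (Fin.cons (1 : MvPolynomial ℤ ℤ) Q : Fin (s+1) → MvPolynomial ℤ ℤ) k with hPnew
    refine ⟨Pnew, ?_, ?_⟩
    · intro k
      refine MvPolynomial.IsHomogeneous.add ?_ ?_
      · rcases Fin.eq_castSucc_or_eq_last k with ⟨k', rfl⟩ | rfl
        · simpa [Fin.snoc_castSucc] using hP k'
        · simp only [Fin.snoc_last]
          exact MvPolynomial.isHomogeneous_zero _ _ _
      · refine Fin.cases ?_ ?_ k
        · simpa using hdh.mul (MvPolynomial.isHomogeneous_one ℤ ℤ)
        · intro i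
          have := hdh.mul (hQ i)
          simpa [Fin.val_succ, add_comm, add_assoc, add_left_comm] using this
    · have hsum : (∑ k : Fin (s+1), MvPolynomial.C (Pnew k)
            * fh p (MvPolynomial.X : Fin p → MvPolynomial (Fin p) (MvPolynomial ℤ ℤ)) CA (j - (((k : ℕ) : ℤ) + 1)))
          = (∑ k : Fin s, MvPolynomial.C (P k)
              * fh p (MvPolynomial.X : Fin p → MvPolynomial (Fin p) (MvPolynomial ℤ ℤ)) CA (j - (((k : ℕ) : ℤ) + 1)))
            + (MvPolynomial.C d * fh p (MvPolynomial.X : Fin p → MvPolynomial (Fin p) (MvPolynomial ℤ ℤ)) CA (j - 1)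
              + MvPolynomial.C d * ∑ k : Fin s, MvPolynomial.C (Q k)
                * fh p (MvPolynomial.X : Fin p → MvPolynomial (Fin p) (MvPolynomial ℤ ℤ)) CA (j - 1 - (((k : ℕ) : ℤ) + 1))) := by
        simp only [hPnew, map_add, map_mul, add_mul]
        rw [Finset.sum_add_distrib]
        congr 1
        · rw [Fin.sum_univ_castSucc]
          simp [Fin.snoc_castSucc, Fin.snoc_last]
        · rw [Fin.sum_univ_succ, Finset.mul_sum]
          simp only [Fin.cons_zero, Fin.cons_succ, map_one, mul_one, Fin.val_zero, Fin.val_succ]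
          congr 1
          refine Finset.sum_congr rfl fun i _ => ?_
          push_cast
          rw [show j - ((((i : Fin s) : ℕ) : ℤ) + 1 + 1) = j - 1 - ((((i : Fin s) : ℕ) : ℤ) + 1) from by ring,
            mul_assoc]
      rw [hshift, step, hPe, hQe, hsum]
      ring

/-- For all `s, j ≥ 0` there are polynomials `P_1,...,P_s ∈ ℤ[a]`,
    `P_k` homogeneous of degree `k`, with
    `h_j(x|τ^{-s}a) = h_j(x|a) + Σ_{k=1}^s P_k · h_{j-k}(x|a)`
    (over the generic parameters, `ℤ[a] = MvPolynomial ℤ ℤ`). -/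
theorem fh_shift_expansion (p s j : ℕ) :
    ∃ P : Fin s → MvPolynomial ℤ ℤ,
      (∀ k : Fin s, (P k).IsHomogeneous ((k : ℕ) + 1)) ∧
      fh p (MvPolynomial.X : Fin p → MvPolynomial (Fin p) (MvPolynomial ℤ ℤ))
          (shiftSeq (fun i => MvPolynomial.C (MvPolynomial.X i)) (-(s : ℤ))) (j : ℤ) =
        fh p (MvPolynomial.X : Fin p → MvPolynomial (Fin p) (MvPolynomial ℤ ℤ)) (fun i => MvPolynomial.C (MvPolynomial.X i)) (j : ℤ) +
          ∑ k : Fin s, MvPolynomial.C (P k) *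
            fh p (MvPolynomial.X : Fin p → MvPolynomial (Fin p) (MvPolynomial ℤ ℤ)) (fun i => MvPolynomial.C (MvPolynomial.X i))
              ((j : ℤ) - (((k : ℕ) : ℤ) + 1)) := by
  exact aux p s (j : ℤ)
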